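/- arXiv:2112.12801 — 2 statements merged into one kernel-verified Lean document; each statement's English description precedes it below -/
import Mathlib

section
/- Let H and H' be subgroups of a fixed finite abelian group, let μ be the Moebius function of the subgroup lattice of that group, and let H'' ⊆ H ∩ H' be a subgroup. Then the sum of μ(H̃, H)·μ(H̃', H') over all pairs of subgroups H̃ ⊆ H and H̃' ⊆ H' with H̃ ∩ H̃' = H'' equals μ(H'', H) if H = H', and equals 0 if H ≠ H'. -/
open scoped Classical

noncomputable section MoebiusAux

variable {G : Type*} [CommGroup G] [Fintype G] [Fintype (Subgroup G)]

local instance : LocallyFiniteOrder (Subgroup G) := Fintype.toLocallyFiniteOrder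

set_option linter.unusedSectionVars false

/-- The hypothesized Moebius function agrees with Mathlib's incidence-algebra `mu`. -/
lemma mu_eq_hyp
    (μ : Subgroup G → Subgroup G → ℤ)
    (hμ_self : ∀ H : Subgroup G, μ H H = 1)
    (hμ_not_le : ∀ H K : Subgroup G, ¬ H ≤ K → μ H K = 0)
    (hμ_rec : ∀ H K : Subgroup G, H < K →
      μ H K = -∑ Z ∈ Finset.univ.filter (fun Z : Subgroup G => H ≤ Z ∧ Z < K), μ H Z)
    (H K : Subgroup G) : μ H K = IncidenceAlgebra.mu ℤ H K := by
  induction K using WellFoundedLT.induction with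
  | ind K ih =>
    by_cases hle : H ≤ K
    · rcases eq_or_lt_of_le hle with rfl | hlt
      · simp [hμ_self]
      · rw [hμ_rec H K hlt, IncidenceAlgebra.mu_eq_neg_sum_Ico_of_ne hlt.ne]
        congr 1
        have : Finset.univ.filter (fun Z : Subgroup G => H ≤ Z ∧ Z < K) = Finset.Ico H K := by
          ext Z; simp [Finset.mem_Ico]
        rw [this]
        exact Finset.sum_congr rfl fun Z hZ => ih Z (Finset.mem_Ico.1 hZ).2
    · rw [hμ_not_le H K hle, IncidenceAlgebra.apply_eq_zero_of_not_le hle]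

/-- The key identity, stated for Mathlib's `mu`. -/
lemma sum_mu_pairs (H H' H'' : Subgroup G) (h1 : H'' ≤ H) (h2 : H'' ≤ H') :
    ∑ p ∈ Finset.univ.filter
        (fun p : Subgroup G × Subgroup G => p.1 ≤ H ∧ p.2 ≤ H' ∧ p.1 ⊓ p.2 = H''),
      IncidenceAlgebra.mu ℤ p.1 H * IncidenceAlgebra.mu ℤ p.2 H'
      = if H = H' then IncidenceAlgebra.mu ℤ H'' H else 0 := by
  set f : Subgroup G → ℤ := fun K => ∑ p ∈ Finset.univ.filter
      (fun p : Subgroup G × Subgroup G => p.1 ≤ H ∧ p.2 ≤ H' ∧ p.1 ⊓ p.2 = K),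
      IncidenceAlgebra.mu ℤ p.1 H * IncidenceAlgebra.mu ℤ p.2 H' with hf
  set g : Subgroup G → ℤ := fun K =>
      (if K = H then 1 else 0) * (if K = H' then 1 else 0) with hg
  have hgf : ∀ K, g K = ∑ L ∈ Finset.Ici K, f L := by
    intro K
    have hfib : ∑ L ∈ Finset.Ici K, f L =
        ∑ p ∈ (Finset.Icc K H ×ˢ Finset.Icc K H'),
          IncidenceAlgebra.mu ℤ p.1 H * IncidenceAlgebra.mu ℤ p.2 H' := by
      rw [hf]
      rw [← Finset.sum_fiberwise_of_maps_to (g := fun p : Subgroup G × Subgroup G => p.1 ⊓ p.2)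
        (t := Finset.Ici K) ?_]
      · apply Finset.sum_congr rfl
        intro L hL
        apply Finset.sum_congr ?_ fun _ _ => rfl
        ext p
        simp only [Finset.mem_filter, Finset.mem_product, Finset.mem_Icc, Finset.mem_univ,
          true_and]
        constructor
        · rintro ⟨hp1, hp2, hpl⟩
          exact ⟨⟨⟨le_trans (Finset.mem_Ici.1 hL) (hpl ▸ inf_le_left), hp1⟩,
                 ⟨le_trans (Finset.mem_Ici.1 hL) (hpl ▸ inf_le_right), hp2⟩⟩, hpl⟩
        · rintro ⟨⟨⟨_, hp1⟩, _, hp2⟩, hpl⟩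
          exact ⟨hp1, hp2, hpl⟩
      · intro p hp
        simp only [Finset.mem_product, Finset.mem_Icc] at hp
        exact Finset.mem_Ici.2 (le_inf hp.1.1 hp.2.1)
    rw [hfib, Finset.sum_product]
    simp only [hg]
    rw [← IncidenceAlgebra.sum_Icc_mu_left (𝕜 := ℤ) K H,
      ← IncidenceAlgebra.sum_Icc_mu_left (𝕜 := ℤ) K H', Finset.sum_mul_sum]
  have hinv := IncidenceAlgebra.moebius_inversion_top f g hgf H''
  suffices hS : f H'' = if H = H' then IncidenceAlgebra.mu ℤ H'' H else 0 by
    rw [hf] at hS; exact hS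
  rw [hinv]
  by_cases hHH : H = H'
  · subst hHH
    rw [Finset.sum_eq_single H]
    · simp [hg]
    · intro K hK hne
      simp [hg, hne]
    · intro hH
      exact absurd (Finset.mem_Ici.2 h1) hH
  · rw [if_neg hHH]
    apply Finset.sum_eq_zero
    intro K hK
    rcases eq_or_ne K H with rfl | hne
    · simp [hg, hHH]
    · simp [hg, hne]

end MoebiusAux

/-- Let `H`, `H'` be subgroups of a fixed finite abelian group, `μ` the Moebius function
of its subgroup lattice (characterized by `μ(x,x) = 1`, `μ(x,y) = 0` unless `x ≤ y`, and
`μ(x,y) = -∑_{x ≤ z < y} μ(x,z)` for `x < y`), and `H'' ⊆ H ∩ H'` a subgroup.  Then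
`∑ μ(H̃,H)·μ(H̃',H')`, over all pairs `H̃ ⊆ H`, `H̃' ⊆ H'` with `H̃ ∩ H̃' = H''`, equals
`μ(H'',H)` if `H = H'` and `0` otherwise. -/
theorem sum_moebius_pairs_inf
    (G : Type*) [CommGroup G] [Fintype G] [Fintype (Subgroup G)]
    (μ : Subgroup G → Subgroup G → ℤ)
    (hμ_self : ∀ H : Subgroup G, μ H H = 1)
    (hμ_not_le : ∀ H K : Subgroup G, ¬ H ≤ K → μ H K = 0)
    (hμ_rec : ∀ H K : Subgroup G, H < K →
      μ H K = -∑ Z ∈ Finset.univ.filter (fun Z : Subgroup G => H ≤ Z ∧ Z < K), μ H Z)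
    (H H' H'' : Subgroup G) (h : H'' ≤ H ⊓ H') :
    ∑ p ∈ Finset.univ.filter
        (fun p : Subgroup G × Subgroup G => p.1 ≤ H ∧ p.2 ≤ H' ∧ p.1 ⊓ p.2 = H''),
      μ p.1 H * μ p.2 H' = if H = H' then μ H'' H else 0 := by
  have hmu := mu_eq_hyp μ hμ_self hμ_not_le hμ_rec
  simp only [hmu]
  exact sum_mu_pairs H H' H'' (h.trans inf_le_left) (h.trans inf_le_right)
end

section
/- For every finite group G there exists N such that the combinatorial Burnside group BC_n(G) is the zero group for all n > N. -/
open scoped Classical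

noncomputable section

namespace CBG

/-- The character group `A^∨ = Hom(A, ℂ^×)` of a group `A`, written additively. -/
abbrev Ch (A : Type*) [Group A] : Type _ := Additive (A →* ℂˣ)

/-- A multiset of characters generates the character group. -/
def gens {A : Type*} [Group A] (β : Multiset (Ch A)) : Prop :=
  AddSubgroup.closure {b | b ∈ β} = ⊤

variable (G : Type*) [Group G]

/-- Generating symbols `(H, Y, β)` of the combinatorial symbols group `SC_n(G)`:
`H ⊆ G` abelian, `H ⊆ Y ⊆ Z_G(H)`, and `β` a multiset (= sequence modulo the
reordering relation (O)) of nontrivial characters of `H`, of length `1 ≤ r ≤ n`,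
generating `H^∨`. -/
structure Symbol (n : ℕ) where
  H : Subgroup G
  Y : Subgroup G
  habelian : IsMulCommutative H
  hHY : H ≤ Y
  hYC : Y ≤ Subgroup.centralizer (H : Set G)
  β : Multiset (Ch H)
  hcard₁ : 1 ≤ Multiset.card β
  hcard₂ : Multiset.card β ≤ n
  hne : ∀ b ∈ β, b ≠ 0
  hgen : gens β

/-- The combinatorial symbols group `SC_n(G)`: the free `ℤ`-module on the symbols. -/
abbrev SC (n : ℕ) : Type _ := Symbol G n →₀ ℤ

/-- The symbol `(H, Y, β)` as an element of `SC_n(G)`, with the convention that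
an invalid symbol (in particular, one whose character sequence contains the
trivial character) is `0`. -/
def mkSC (n : ℕ) (H Y : Subgroup G) (β : Multiset (Ch H)) : SC G n :=
  if h : IsMulCommutative H ∧ H ≤ Y ∧ Y ≤ Subgroup.centralizer (H : Set G) ∧
      1 ≤ Multiset.card β ∧ Multiset.card β ≤ n ∧ (∀ b ∈ β, b ≠ 0) ∧ gens β then
    Finsupp.single ⟨H, Y, h.1, h.2.1, h.2.2.1, β, h.2.2.2.1, h.2.2.2.2.1,
      h.2.2.2.2.2.1, h.2.2.2.2.2.2⟩ 1
  else 0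

/-- Restriction of a character to a smaller subgroup. -/
def resCh {H K : Subgroup G} (h : K ≤ H) (b : Ch H) : Ch K :=
  Additive.ofMul ((Additive.toMul b).comp (Subgroup.inclusion h))

/-- The conjugate subgroup `gHg⁻¹`. -/
def conjSub (g : G) (H : Subgroup G) : Subgroup G :=
  Subgroup.map (MulAut.conj g : G ≃* G) H

/-- Transport of a character of `H` to a character of `K = gHg⁻¹` along conjugation by `g`. -/
def conjChTo {H K : Subgroup G} (g : G) (hK : conjSub G g H = K) (b : Ch H) : Ch K :=
  Additive.ofMul ((Additive.toMul b).comp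
    (((MulEquiv.subgroupMap (MulAut.conj g : G ≃* G) H).trans
      (MulEquiv.subgroupCongr hK)).symm.toMonoidHom))

/-- Relation (C): conjugation. -/
def relC (n : ℕ) : Set (SC G n) :=
  {x | ∃ (s : Symbol G n) (g : G),
    x = Finsupp.single s 1 -
        mkSC G n (conjSub G g s.H) (conjSub G g s.Y) (s.β.map (conjChTo G g rfl))}

/-- Relation (V): vanishing. -/
def relV (n : ℕ) : Set (SC G n) :=
  {x | ∃ s : Symbol G n,
    (s.H = ⊥ ∨ ∃ (b₁ b₂ : Ch s.H) (rest : Multiset (Ch s.H)),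
      s.β = b₁ ::ₘ b₂ ::ₘ rest ∧ b₁ + b₂ = 0) ∧
    x = Finsupp.single s 1}

/-- Relation (B2): blowup. -/
def relB2 (n : ℕ) : Set (SC G n) :=
  {x | ∃ (s : Symbol G n) (b₁ b₂ : Ch s.H) (rest : Multiset (Ch s.H)),
    s.β = b₁ ::ₘ b₂ ::ₘ rest ∧
    ((b₁ = b₂ ∧ x = Finsupp.single s 1 - mkSC G n s.H s.Y (b₂ ::ₘ rest)) ∨
     (b₁ ≠ b₂ ∧ (∃ b ∈ s.β, b ∈ AddSubgroup.zmultiples (b₁ - b₂)) ∧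
        x = Finsupp.single s 1 - mkSC G n s.H s.Y ((b₁ - b₂) ::ₘ b₂ ::ₘ rest)
            - mkSC G n s.H s.Y (b₁ ::ₘ (b₂ - b₁) ::ₘ rest)) ∨
     (b₁ ≠ b₂ ∧ ¬(∃ b ∈ s.β, b ∈ AddSubgroup.zmultiples (b₁ - b₂)) ∧
        x = Finsupp.single s 1 - mkSC G n s.H s.Y ((b₁ - b₂) ::ₘ b₂ ::ₘ rest)
            - mkSC G n s.H s.Y (b₁ ::ₘ (b₂ - b₁) ::ₘ rest)
            - mkSC G n (Subgroup.map s.H.subtype (MonoidHom.ker (Additive.toMul (b₁ - b₂))))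
                s.Y (s.β.map (resCh G (Subgroup.map_subtype_le _)))))}

/-- Relation (B2'): modified blowup. -/
def relB2' (n : ℕ) : Set (SC G n) :=
  {x | ∃ (s : Symbol G n) (b₁ b₂ : Ch s.H) (rest : Multiset (Ch s.H)),
    s.β = b₁ ::ₘ b₂ ::ₘ rest ∧
    ((b₁ = b₂ ∧ x = Finsupp.single s 1 - mkSC G n s.H s.Y (b₂ ::ₘ rest)) ∨
     (b₁ ≠ b₂ ∧
        x = Finsupp.single s 1 - mkSC G n s.H s.Y ((b₁ - b₂) ::ₘ b₂ ::ₘ rest)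
            - mkSC G n s.H s.Y (b₁ ::ₘ (b₂ - b₁) ::ₘ rest)))}

/-- The combinatorial Burnside group `BC_n(G)`. -/
abbrev BC (n : ℕ) : Type _ :=
  SC G n ⧸ Submodule.span ℤ (relC G n ∪ relV G n ∪ relB2 G n)

/-- The group `BC'_n(G)`. -/
abbrev BC' (n : ℕ) : Type _ :=
  SC G n ⧸ Submodule.span ℤ (relC G n ∪ relV G n ∪ relB2' G n)

/-- Projection `SC_n(G) → BC_n(G)`. -/
def BCmk (n : ℕ) : SC G n →ₗ[ℤ] BC G n :=
  Submodule.mkQ _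

/-- Projection `SC_n(G) → BC'_n(G)`. -/
def BC'mk (n : ℕ) : SC G n →ₗ[ℤ] BC' G n :=
  Submodule.mkQ _

end CBG

open CBG

/-!
Symbols are killed by well-founded induction on the subgroup `H`, so that every kernel term
produced by a blowup (which lives on a proper subgroup of `H`) may be assumed to vanish. For fixed
`H`, a repeated character contracts away by (B2), so one may assume that the entries of `β` are
distinct; then `|β| ≤ |H^∨|`. Write `β = (a, δ)` with `a` of order `m`. By induction on `k`, the
symbols `(a, -k a, δ)` vanish for `1 ≤ k < m`: blowing up the pair `(-k a, -(k+1) a)` in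
`(a, -k a, -(k+1) a, δ)` gives `(a, -(k+1) a, a, δ)`, which contracts to `(a, -(k+1) a, δ)`,
and `(-k a, -a, a, δ)`, which vanishes by (V). For `k = m - 1` this is `(a, a, δ) = (a, δ) = β`.
The longest symbol used has `|δ| + m + 1 ≤ 2 |H^∨|` entries, whence `N = 2 max_H |H^∨|`.
-/

theorem Multiset.Nodup.card_le_natCard {α : Type*} [Finite α] {s : Multiset α} (h : s.Nodup) :
    Multiset.card s ≤ Nat.card α := by
  induction s using Quot.inductionOn
  exact List.Nodup.length_le_natCard h

theorem Subgroup.map_subtype_ker_lt {G M : Type*} [Group G] [MulOneClass M] {H : Subgroup G}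
    {f : H →* M} (hf : f ≠ 1) : f.ker.map H.subtype < H :=
  calc f.ker.map H.subtype
      < (⊤ : Subgroup H).map H.subtype :=
        Subgroup.map_subtype_lt_map_subtype.2 (lt_top_iff_ne_top.2 (mt MonoidHom.ker_eq_top_iff.1 hf))
    _ = H := by rw [← MonoidHom.range_eq_map, Subgroup.range_subtype]

namespace CBG

open Multiset (card card_cons mem_cons_self cons_swap)

variable {G : Type*} [Group G] {n : ℕ} {H Y : Subgroup G}

theorem gens_of_subset {A : Type*} [Group A] {β γ : Multiset (Ch A)} (h : gens β) (hβγ : β ⊆ γ) :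
    gens γ :=
  top_le_iff.1 (h ▸ (AddSubgroup.closure_le _).2 fun _ hb => AddSubgroup.subset_closure (hβγ hb))

/-- The condition under which `mkSC G n H Y β` is a basis element rather than `0`. -/
def IsSymbol (n : ℕ) (H Y : Subgroup G) (β : Multiset (Ch H)) : Prop :=
  IsMulCommutative H ∧ H ≤ Y ∧ Y ≤ Subgroup.centralizer (H : Set G) ∧
    1 ≤ card β ∧ card β ≤ n ∧ (∀ b ∈ β, b ≠ 0) ∧ gens β

def IsSymbol.toSymbol {β : Multiset (Ch H)} (h : IsSymbol n H Y β) : Symbol G n :=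
  ⟨H, Y, h.1, h.2.1, h.2.2.1, β, h.2.2.2.1, h.2.2.2.2.1, h.2.2.2.2.2.1, h.2.2.2.2.2.2⟩

theorem IsSymbol.one_le_card {β : Multiset (Ch H)} (h : IsSymbol n H Y β) : 1 ≤ card β :=
  h.2.2.2.1

theorem IsSymbol.card_le {β : Multiset (Ch H)} (h : IsSymbol n H Y β) : card β ≤ n :=
  h.2.2.2.2.1

theorem IsSymbol.ne_zero {β : Multiset (Ch H)} (h : IsSymbol n H Y β) {b : Ch H} (hb : b ∈ β) :
    b ≠ 0 :=
  h.2.2.2.2.2.1 b hb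

theorem mkSC_of_isSymbol {β : Multiset (Ch H)} (h : IsSymbol n H Y β) :
    mkSC G n H Y β = Finsupp.single h.toSymbol 1 :=
  dif_pos h

theorem mkSC_of_not_isSymbol {β : Multiset (Ch H)} (h : ¬IsSymbol n H Y β) :
    mkSC G n H Y β = 0 :=
  dif_neg h

theorem Symbol.isSymbol (s : Symbol G n) : IsSymbol n s.H s.Y s.β :=
  ⟨s.habelian, s.hHY, s.hYC, s.hcard₁, s.hcard₂, s.hne, s.hgen⟩

theorem Symbol.mkSC_eq_single (s : Symbol G n) : mkSC G n s.H s.Y s.β = Finsupp.single s 1 :=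
  mkSC_of_isSymbol s.isSymbol

theorem IsSymbol.cons {β : Multiset (Ch H)} {b : Ch H} (h : IsSymbol n H Y β) (hb : b ≠ 0)
    (hcard : card β < n) : IsSymbol n H Y (b ::ₘ β) := by
  obtain ⟨habelian, hHY, hYC, -, -, hne, hgen⟩ := h
  refine ⟨habelian, hHY, hYC, by simp, by simpa using hcard, ?_, ?_⟩
  · simpa [Multiset.forall_mem_cons] using ⟨hb, hne⟩
  · exact gens_of_subset hgen (Multiset.subset_cons β b)

theorem isSymbol_cons_cons_self_iff {a : Ch H} {δ : Multiset (Ch H)} (hcard : card δ + 2 ≤ n) :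
    IsSymbol n H Y (a ::ₘ a ::ₘ δ) ↔ IsSymbol n H Y (a ::ₘ δ) := by
  refine ⟨fun h => ?_,
    fun h => h.cons (h.ne_zero (mem_cons_self a δ)) (by simp only [card_cons]; omega)⟩
  obtain ⟨habelian, hHY, hYC, -, -, hne, hgen⟩ := h
  refine ⟨habelian, hHY, hYC, by simp, ?_, fun b hb => hne b (Multiset.mem_cons_of_mem hb), ?_⟩
  · simp only [card_cons]; omega
  · exact gens_of_subset hgen fun c hc => by simpa using hc

def bcSymbol (n : ℕ) (H Y : Subgroup G) (β : Multiset (Ch H)) : BC G n :=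
  BCmk G n (mkSC G n H Y β)

theorem bcSymbol_of_not_isSymbol {β : Multiset (Ch H)} (h : ¬IsSymbol n H Y β) :
    bcSymbol n H Y β = 0 := by
  rw [bcSymbol, mkSC_of_not_isSymbol h, map_zero]

theorem BCmk_eq_zero_of_mem {x : SC G n} (hx : x ∈ relC G n ∪ relV G n ∪ relB2 G n) :
    BCmk G n x = 0 :=
  (Submodule.Quotient.mk_eq_zero _).2 (Submodule.subset_span hx)

theorem bcSymbol_cons_cons_neg (b : Ch H) (δ : Multiset (Ch H)) :
    bcSymbol n H Y (b ::ₘ -b ::ₘ δ) = 0 := by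
  by_cases h : IsSymbol n H Y (b ::ₘ -b ::ₘ δ)
  · rw [bcSymbol, mkSC_of_isSymbol h]
    exact BCmk_eq_zero_of_mem (.inl (.inr ⟨h.toSymbol, .inr ⟨b, -b, δ, rfl, add_neg_cancel b⟩, rfl⟩))
  · exact bcSymbol_of_not_isSymbol h

theorem bcSymbol_cons_cons_self {a : Ch H} {δ : Multiset (Ch H)} (hcard : card δ + 2 ≤ n) :
    bcSymbol n H Y (a ::ₘ a ::ₘ δ) = bcSymbol n H Y (a ::ₘ δ) := by
  by_cases h : IsSymbol n H Y (a ::ₘ a ::ₘ δ)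
  · have hrel := BCmk_eq_zero_of_mem
      (.inr ⟨h.toSymbol, a, a, δ, rfl, .inl ⟨rfl, rfl⟩⟩ : _ ∈ relC G n ∪ relV G n ∪ relB2 G n)
    rwa [map_sub, sub_eq_zero, ← mkSC_of_isSymbol h] at hrel
  · rw [bcSymbol_of_not_isSymbol h,
      bcSymbol_of_not_isSymbol (mt (isSymbol_cons_cons_self_iff hcard).2 h)]

theorem bcSymbol_blowup {b₁ b₂ : Ch H} {δ : Multiset (Ch H)} (h : IsSymbol n H Y (b₁ ::ₘ b₂ ::ₘ δ))
    (hne : b₁ ≠ b₂)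
    (hker : bcSymbol n ((Additive.toMul (b₁ - b₂)).ker.map H.subtype) Y
      ((b₁ ::ₘ b₂ ::ₘ δ).map (resCh G (Subgroup.map_subtype_le _))) = 0) :
    bcSymbol n H Y (b₁ ::ₘ b₂ ::ₘ δ) =
      bcSymbol n H Y ((b₁ - b₂) ::ₘ b₂ ::ₘ δ) + bcSymbol n H Y (b₁ ::ₘ (b₂ - b₁) ::ₘ δ) := by
  have hrel : ∀ x, x ∈ relB2 G n → BCmk G n x = 0 := fun x hx => BCmk_eq_zero_of_mem (.inr hx)
  rw [bcSymbol, bcSymbol, bcSymbol, mkSC_of_isSymbol h, ← sub_eq_zero, ← sub_sub, ← map_sub,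
    ← map_sub]
  by_cases hc : ∃ b ∈ b₁ ::ₘ b₂ ::ₘ δ, b ∈ AddSubgroup.zmultiples (b₁ - b₂)
  · exact hrel _ ⟨h.toSymbol, b₁, b₂, δ, rfl, .inr (.inl ⟨hne, hc, rfl⟩)⟩
  · have hrel₃ := hrel _ ⟨h.toSymbol, b₁, b₂, δ, rfl, .inr (.inr ⟨hne, hc, rfl⟩)⟩
    rw [map_sub, sub_eq_zero] at hrel₃
    exact hrel₃.trans hker

def VanishesBelow (n : ℕ) (H : Subgroup G) : Prop :=
  ∀ K < H, ∀ (Y : Subgroup G) (β : Multiset (Ch K)), bcSymbol n K Y β = 0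

theorem VanishesBelow.blowup (hsmall : VanishesBelow n H) {b₁ b₂ : Ch H} {δ : Multiset (Ch H)}
    (h : IsSymbol n H Y (b₁ ::ₘ b₂ ::ₘ δ)) (hne : b₁ ≠ b₂) :
    bcSymbol n H Y (b₁ ::ₘ b₂ ::ₘ δ) =
      bcSymbol n H Y ((b₁ - b₂) ::ₘ b₂ ::ₘ δ) + bcSymbol n H Y (b₁ ::ₘ (b₂ - b₁) ::ₘ δ) :=
  bcSymbol_blowup h hne <| hsmall _
    (Subgroup.map_subtype_ker_lt (toMul_eq_one.not.2 (sub_ne_zero.2 hne))) _ _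

theorem VanishesBelow.bcSymbol_cons_neg_nsmul (hsmall : VanishesBelow n H) {k : ℕ} (hk : 1 ≤ k)
    (a : Ch H) {δ : Multiset (Ch H)} (hcard : card δ + k + 2 ≤ n) :
    bcSymbol n H Y (a ::ₘ -(k • a) ::ₘ δ) = 0 := by
  induction k, hk using Nat.le_induction generalizing δ with
  | base => rw [one_nsmul]; exact bcSymbol_cons_cons_neg a δ
  | succ k hk ih =>
    by_cases hv : IsSymbol n H Y (a ::ₘ -((k + 1) • a) ::ₘ δ)
    swap
    · exact bcSymbol_of_not_isSymbol hv
    have hsucc : (k + 1) • a = k • a + a := succ_nsmul a k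
    -- `rw` with generic group lemmas fails on `Ch H` (its `ℂˣ` instances come by two paths that
    -- agree only up to unfolding), hence `abel` and explicit `(α := Ch H)` below.
    by_cases hka : k • a = 0
    · have hneg : -((k + 1) • a) = -a := by rw [hsucc, hka]; abel
      rw [hneg]
      exact bcSymbol_cons_cons_neg a δ
    have hZ : IsSymbol n H Y (-(k • a) ::ₘ -((k + 1) • a) ::ₘ a ::ₘ δ) := by
      rw [cons_swap _ a]
      exact hv.cons ((neg_ne_zero (α := Ch H)).2 hka) (by simp only [card_cons]; omega)
    have hdiff : -(k • a) - -((k + 1) • a) = a := by rw [hsucc]; abel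
    have hdiff' : -((k + 1) • a) - -(k • a) = -a := by rw [hsucc]; abel
    have hne : -(k • a) ≠ -((k + 1) • a) := fun h => hv.ne_zero (mem_cons_self _ _) <| by
      rw [← hdiff, h]
      exact sub_self (G := Ch H) _
    have hvan : bcSymbol n H Y (-(k • a) ::ₘ -a ::ₘ a ::ₘ δ) = 0 := by
      rw [cons_swap (-a) a, cons_swap _ a, cons_swap (-(k • a)) (-a)]
      exact bcSymbol_cons_cons_neg a _
    calc bcSymbol n H Y (a ::ₘ -((k + 1) • a) ::ₘ δ)
        = bcSymbol n H Y (a ::ₘ a ::ₘ -((k + 1) • a) ::ₘ δ) :=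
          (bcSymbol_cons_cons_self (by simp only [card_cons]; omega)).symm
      _ = bcSymbol n H Y ((-(k • a) - -((k + 1) • a)) ::ₘ -((k + 1) • a) ::ₘ a ::ₘ δ) +
          bcSymbol n H Y (-(k • a) ::ₘ (-((k + 1) • a) - -(k • a)) ::ₘ a ::ₘ δ) := by
        rw [hdiff, hdiff', hvan, add_zero, cons_swap a (-((k + 1) • a))]
      _ = bcSymbol n H Y (-(k • a) ::ₘ -((k + 1) • a) ::ₘ a ::ₘ δ) := (hsmall.blowup hZ hne).symm
      _ = 0 := by
        rw [cons_swap _ a, cons_swap _ a]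
        exact ih (by simp only [card_cons]; omega)

theorem VanishesBelow.bcSymbol_of_nodup [Finite H] (hsmall : VanishesBelow n H)
    {β : Multiset (Ch H)} (hβ : β.Nodup) (hn : 2 * Nat.card (Ch H) ≤ n) :
    bcSymbol n H Y β = 0 := by
  by_cases hv : IsSymbol n H Y β
  swap
  · exact bcSymbol_of_not_isSymbol hv
  obtain ⟨x, hx⟩ := Multiset.card_pos_iff_exists_mem.1 hv.one_le_card
  obtain ⟨δ, rfl⟩ := Multiset.exists_cons_of_mem hx
  have hord : 2 ≤ addOrderOf x := by
    have := addOrderOf_pos x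
    have := mt (AddMonoid.addOrderOf_eq_one_iff (G := Ch H)).1 (hv.ne_zero hx)
    omega
  have hneg : -((addOrderOf x - 1) • x) = x := by
    obtain ⟨j, hj⟩ : ∃ j, addOrderOf x = j + 1 := ⟨addOrderOf x - 1, by omega⟩
    have h := addOrderOf_nsmul_eq_zero x
    rw [hj, succ_nsmul] at h
    rw [hj, Nat.add_sub_cancel]
    calc -(j • x) = -(j • x) + (j • x + x) := by rw [h]; abel
      _ = x := by abel
  have hcard := hβ.card_le_natCard
  have := addOrderOf_le_card (x := x)
  rw [card_cons] at hcard
  calc bcSymbol n H Y (x ::ₘ δ) = bcSymbol n H Y (x ::ₘ x ::ₘ δ) :=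
        (bcSymbol_cons_cons_self (by omega)).symm
    _ = bcSymbol n H Y (x ::ₘ -((addOrderOf x - 1) • x) ::ₘ δ) := by rw [hneg]
    _ = 0 := hsmall.bcSymbol_cons_neg_nsmul (by omega) x (by omega)

theorem VanishesBelow.bcSymbol_eq_zero [Finite H] (hsmall : VanishesBelow n H)
    (hn : 2 * Nat.card (Ch H) ≤ n) (β : Multiset (Ch H)) : bcSymbol n H Y β = 0 := by
  induction β using Multiset.strongInductionOn with
  | ih β ih =>
    by_cases hv : IsSymbol n H Y β
    swap
    · exact bcSymbol_of_not_isSymbol hv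
    by_cases hβ : β.Nodup
    · exact hsmall.bcSymbol_of_nodup hβ hn
    obtain ⟨a, δ, rfl⟩ : ∃ a δ, β = a ::ₘ a ::ₘ δ := by
      simpa [Multiset.nodup_iff_ne_cons_cons] using hβ
    have hcard := hv.card_le
    simp only [card_cons] at hcard
    rw [bcSymbol_cons_cons_self (by omega)]
    exact ih _ (Multiset.lt_cons_self _ a)

theorem bcSymbol_eq_zero [Finite G] (hn : ∀ K : Subgroup G, 2 * Nat.card (Ch K) ≤ n)
    (H Y : Subgroup G) (β : Multiset (Ch H)) : bcSymbol n H Y β = 0 := by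
  induction H using WellFoundedLT.induction generalizing Y with
  | ind H ih => exact VanishesBelow.bcSymbol_eq_zero ih (hn H) β

theorem BCmk_eq_zero [Finite G] (hn : ∀ K : Subgroup G, 2 * Nat.card (Ch K) ≤ n) :
    BCmk G n = 0 :=
  Finsupp.lhom_ext' fun s => LinearMap.ext_ring <| by
    simpa [bcSymbol, s.mkSC_eq_single] using bcSymbol_eq_zero hn s.H s.Y s.β

end CBG

/-- For every finite group `G` there exists `N` such that the combinatorial Burnside
group `BC_n(G)` vanishes for all `n > N`. -/
theorem exists_bound_BC_eq_zero (G : Type*) [Group G] [Finite G] :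
    ∃ N : ℕ, ∀ n : ℕ, n > N → ∀ x : BC G n, x = 0 := by
  obtain ⟨B, hB⟩ := (Set.finite_range fun K : Subgroup G => Nat.card (Ch K)).bddAbove
  refine ⟨2 * B, fun n hn x => ?_⟩
  have hn' (K : Subgroup G) : 2 * Nat.card (Ch K) ≤ n := by
    have : Nat.card (Ch K) ≤ B := hB (Set.mem_range_self K)
    omega
  obtain ⟨y, rfl⟩ := Submodule.mkQ_surjective _ x
  exact LinearMap.congr_fun (BCmk_eq_zero hn') y
end
end
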